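/- arXiv:1201.3694 — 2 statements merged into one kernel-verified Lean document; each statement's English description precedes it below -/
import Mathlib

section
/- Let N be a free abelian group of finite rank with a symmetric bilinear form B such that B is nondegenerate, and let M ⊆ N be a submonoid generating N as a group. If the dual monoid Nef = { x ∈ N : B(x,m) ≥ 0 for all m ∈ M } is finitely generated and M is saturated in the sense that the rational cone spanned by M equals the dual cone of Nef in N⊗Q, then M is finitely generated. -/
/-!
Write `S = {y | ∀ x ∈ Nef, 0 ≤ B y x}`. Since `Nef` is generated by a finite set `X`, membership in
`S` is a finite system of linear inequalities, so `S` is the image of the monoid of nonnegative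
integer solutions of a linear system, which is finitely generated by Dickson's lemma (Gordan's
lemma). Saturation says that every element of `S` has a positive multiple in `M`, so a common
multiple `K` of the generators `gᵢ` of `S` satisfies `K • gᵢ ∈ M`. Writing the coefficients of an
element of `M` as `r + K • b` with `0 ≤ r < K`, for each of the finitely many residues `r` the set
of admissible `b` is an upper set of `ℕⁿ`, hence has finitely many minimal elements; these,
together with the `K • gᵢ`, generate `M`.
-/

theorem Set.exists_finite_subset_forall_exists_le {α : Type*} [PartialOrder α]
    [WellQuasiOrderedLE α] (s : Set α) : ∃ t ⊆ s, t.Finite ∧ ∀ x ∈ s, ∃ y ∈ t, y ≤ x := by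
  refine ⟨{x | Minimal (· ∈ s) x}, fun _ hx => hx.prop,
    WellQuasiOrderedLE.finite_of_isAntichain (setOfPred_minimal_antichain _), fun x hx => ?_⟩
  obtain ⟨y, hyx, hy⟩ := exists_minimal_le_of_wellFoundedLT _ x hx
  exact ⟨y, hy, hyx⟩

namespace AddSubmonoid

variable {P : Type*} [AddCommMonoid P]

theorem FG.exists_eq_range_linearCombination {S : AddSubmonoid P} (hS : S.FG) :
    ∃ (n : ℕ) (g : Fin n → P),
      S = (LinearMap.range (Fintype.linearCombination ℕ g)).toAddSubmonoid := by
  obtain ⟨n, g, hg⟩ := Submodule.fg_iff_exists_fin_generating_family.1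
    ((Submodule.fg_iff_addSubmonoid_fg S.toNatSubmodule).2 hS)
  exact ⟨n, g, by rw [Fintype.range_linearCombination, hg]; rfl⟩

theorem exists_pos_nsmul_mem_of_finite {ι : Type*} [Finite ι] {M : AddSubmonoid P} {g : ι → P}
    (h : ∀ i, ∃ n, 0 < n ∧ n • g i ∈ M) : ∃ K, 0 < K ∧ ∀ i, K • g i ∈ M := by
  cases nonempty_fintype ι
  choose n hn_pos hn using h
  refine ⟨∏ i, n i, Finset.prod_pos fun i _ => hn_pos i, fun i => ?_⟩
  obtain ⟨c, hc⟩ := Finset.dvd_prod_of_mem n (Finset.mem_univ i)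
  rw [hc, mul_comm, mul_smul]
  exact nsmul_mem (hn i) c

theorem fg_comap_mrange {N A Q : Type*} [AddCommMonoid N] [AddMonoid.FG N] [AddCommMonoid A]
    [PartialOrder A] [WellQuasiOrderedLE A] [IsOrderedCancelAddMonoid A] [CanonicallyOrderedAdd A]
    [AddMonoid Q] [IsCancelAdd Q] (φ : N →+ Q) (c : A →+ Q) :
    ((AddMonoidHom.mrange c).comap φ).FG := by
  obtain ⟨n, g, hg⟩ := (AddMonoid.fg_def.1 ‹_›).exists_eq_range_linearCombination
  set π := (Fintype.linearCombination ℕ g).toAddMonoidHom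
  have hπ : ∀ y, ∃ u, π u = y := fun y => by
    have hy := mem_top y
    rwa [hg, Submodule.mem_toAddSubmonoid, LinearMap.mem_range] at hy
  let p : (Fin n → ℕ) × A →+ N := π.comp (AddMonoidHom.fst _ _)
  convert (fg_eqLocusM (φ.comp p) (c.comp (AddMonoidHom.snd _ _))).map p
  ext y
  constructor
  · rintro ⟨a, ha⟩
    obtain ⟨u, rfl⟩ := hπ y
    exact ⟨(u, a), ha.symm, rfl⟩
  · rintro ⟨⟨u, a⟩, hua, rfl⟩
    exact ⟨a, hua.symm⟩

theorem fg_of_forall_exists_nsmul_mem {S M : AddSubmonoid P} (hS : S.FG) (hMS : M ≤ S)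
    (h : ∀ s ∈ S, ∃ n, 0 < n ∧ n • s ∈ M) : M.FG := by
  obtain ⟨n, g, rfl⟩ := hS.exists_eq_range_linearCombination
  set π := Fintype.linearCombination ℕ g
  obtain ⟨K, hK, hKg⟩ := exists_pos_nsmul_mem_of_finite (M := M) (g := g) fun i =>
    h _ ⟨Pi.single i 1, by simp [π]⟩
  set G₀ := Set.range fun i => K • g i
  have hKπ : ∀ a, K • π a ∈ closure G₀ := fun a => by
    rw [Fintype.linearCombination_apply, Finset.smul_sum]
    exact sum_mem _ fun i _ =>
      smul_comm K (a i) (g i) ▸ nsmul_mem (subset_closure (Set.mem_range_self i)) _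
  let lift (r : Fin n → Fin K) (b : Fin n → ℕ) : Fin n → ℕ := (fun i => (r i : ℕ)) + K • b
  choose t ht_sub ht_fin ht_le using fun r =>
    Set.exists_finite_subset_forall_exists_le {b | π (lift r b) ∈ M}
  refine (fg_iff _).2 ⟨(⋃ r, (π ∘ lift r) '' t r) ∪ G₀,
    le_antisymm (closure_le.2 ?_) (fun m hm => ?_),
    (Set.finite_iUnion fun r => (ht_fin r).image _).union (Set.finite_range _)⟩
  · rintro _ (⟨_, ⟨r, rfl⟩, b, hb, rfl⟩ | ⟨i, rfl⟩)
    exacts [ht_sub r hb, hKg i]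
  obtain ⟨a, rfl⟩ := hMS hm
  let r : Fin n → Fin K := fun i => ⟨a i % K, Nat.mod_lt _ hK⟩
  have ha : lift r (a / K) = a := funext fun i => Nat.mod_add_div (a i) K
  obtain ⟨f, hf, hfb⟩ := ht_le r (a / K) (by simpa [ha] using hm)
  have hsplit : a = lift r f + K • (a / K - f) := by
    conv_lhs => rw [← ha]
    funext i
    simp only [lift, Pi.add_apply, Pi.smul_apply, Pi.sub_apply, smul_eq_mul]
    rw [add_assoc, ← mul_add, Nat.add_sub_cancel' (hfb i)]
  rw [hsplit, map_add, map_nsmul]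
  exact add_mem (subset_closure (.inl (Set.mem_iUnion.2 ⟨r, f, hf, rfl⟩)))
    (closure_mono Set.subset_union_right (hKπ _))

theorem forall_mem_closure_nonneg_iff {R : Type*} [AddCommMonoid R] [PartialOrder R]
    [IsOrderedAddMonoid R] (f : P →+ R) (X : Set P) :
    (∀ x ∈ closure X, 0 ≤ f x) ↔ ∀ x ∈ X, 0 ≤ f x := by
  refine ⟨fun h x hx => h x (subset_closure hx), fun h x hx => ?_⟩
  induction hx using closure_induction with
  | mem x hx => exact h x hx
  | zero => simp
  | add x y _ _ hx hy => simpa using add_nonneg hx hy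

end AddSubmonoid

theorem Pi.mem_mrange_natCast_compLeft_iff {ι : Type*} (v : ι → ℤ) :
    v ∈ AddMonoidHom.mrange ((Nat.castAddMonoidHom ℤ).compLeft ι) ↔ ∀ i, 0 ≤ v i := by
  refine ⟨?_, fun h => ⟨fun i => (v i).toNat, funext fun i => Int.toNat_of_nonneg (h i)⟩⟩
  rintro ⟨a, rfl⟩ i
  simp

theorem stmt_2_general {N : Type*} [AddCommGroup N] [Module.Finite ℤ N]
    (B : N →ₗ[ℤ] N →ₗ[ℤ] ℤ) (M : AddSubmonoid N) (Nef : AddSubmonoid N) (hNefFG : Nef.FG)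
    (hsat : ∀ y : N, (∃ m : ℕ, 0 < m ∧ m • y ∈ M) ↔ ∀ x ∈ Nef, 0 ≤ B y x) :
    M.FG := by
  obtain ⟨X, rfl⟩ := hNefFG
  have : AddMonoid.FG N :=
    AddGroup.fg_iff_addMonoid_fg.1 (Module.Finite.iff_addGroup_fg.1 ‹_›)
  let φ : N →+ (X → ℤ) := AddMonoidHom.pi fun x => (B.flip x).toAddMonoidHom
  let c : (X → ℕ) →+ (X → ℤ) := (Nat.castAddMonoidHom ℤ).compLeft X
  have mem_dual : ∀ y, y ∈ (AddMonoidHom.mrange c).comap φ ↔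
      ∀ x ∈ AddSubmonoid.closure (X : Set N), 0 ≤ B y x := fun y => by
    rw [AddSubmonoid.mem_comap, Pi.mem_mrange_natCast_compLeft_iff, Subtype.forall]
    exact (AddSubmonoid.forall_mem_closure_nonneg_iff (B y).toAddMonoidHom _).symm
  refine AddSubmonoid.fg_of_forall_exists_nsmul_mem (AddSubmonoid.fg_comap_mrange φ c)
    (fun m hm => ?_) (fun s hs => ?_)
  · exact (mem_dual m).2 ((hsat m).1 ⟨1, one_pos, by simpa using hm⟩)
  · exact (hsat s).2 ((mem_dual s).1 hs)

/-- If the dual monoid `Nef` of a group-generating submonoid `M` of a lattice with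
nondegenerate symmetric bilinear form is finitely generated, and `M` is saturated
(the lattice points whose positive multiple lies in `M` are exactly those pairing
nonnegatively with all of `Nef`, i.e. the cone of `M` is the dual cone of `Nef`),
then `M` is finitely generated. -/
theorem stmt_2 {N : Type*} [AddCommGroup N] [Module.Free ℤ N] [Module.Finite ℤ N]
    (B : N →ₗ[ℤ] N →ₗ[ℤ] ℤ) (hB : ∀ x y, B x y = B y x)
    (hnd : ∀ x : N, (∀ y : N, B x y = 0) → x = 0)
    (M : AddSubmonoid N) (hgen : AddSubgroup.closure (M : Set N) = ⊤)
    (Nef : AddSubmonoid N)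
    (hNef : (Nef : Set N) = {x : N | ∀ m ∈ M, 0 ≤ B x m})
    (hNefFG : Nef.FG)
    (hsat : ∀ y : N, (∃ m : ℕ, 0 < m ∧ m • y ∈ M) ↔ ∀ x ∈ Nef, 0 ≤ B y x) :
    M.FG :=
  stmt_2_general B M Nef hNefFG hsat
end

section
/- Let S be a submonoid of Zⁿ. If every element y of the rational dual-saturation of S (i.e., every y ∈ Zⁿ with n • y ∈ S for some positive integer n) already lies in S, and S is the set of lattice points of a finitely generated rational polyhedral cone, then S is finitely generated as a monoid. -/
/-!
After clearing denominators, the cone is spanned by integer vectors `w k`, which lie in `S`.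
Write `y ∈ S` as `∑ c k • w k` with `c k ≥ 0`; subtracting `∑ ⌊c k⌋₊ • w k` leaves a lattice
point of the cone with all coefficients in `[0, 1)`, hence in the box `|y j| ≤ ∑ k, |w k j|`.
So `S` is generated by its finitely many points in that box.
-/

open Finset

variable {ι κ : Type*}

def MemRatCone (s : Finset κ) (v : κ → ι → ℚ) (x : ι → ℚ) : Prop :=
  ∃ c : κ → ℚ, (∀ k, 0 ≤ c k) ∧ x = ∑ k ∈ s, c k • v k

theorem memRatCone_of_mem {s : Finset κ} {v : κ → ι → ℚ} {k : κ} (hk : k ∈ s) :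
    MemRatCone s v (v k) := by
  classical
  refine ⟨fun j => if j = k then 1 else 0, fun j => by positivity, ?_⟩
  simp only [ite_smul, one_smul, zero_smul, sum_ite_eq', if_pos hk]

theorem memRatCone_pos_smul_iff {s : Finset κ} {v : κ → ι → ℚ} {d : κ → ℚ}
    (hd : ∀ k, 0 < d k) {x : ι → ℚ} :
    MemRatCone s (fun k => d k • v k) x ↔ MemRatCone s v x := by
  constructor
  · rintro ⟨c, hc, rfl⟩
    exact ⟨fun k => c k * d k, fun k => mul_nonneg (hc k) (hd k).le, by simp only [mul_smul]⟩
  · rintro ⟨c, hc, rfl⟩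
    refine ⟨fun k => c k / d k, fun k => div_nonneg (hc k) (hd k).le, sum_congr rfl fun k _ => ?_⟩
    rw [smul_smul, div_mul_cancel₀ _ (hd k).ne']

abbrev intVecCast (ι : Type*) : (ι → ℤ) →+ (ι → ℚ) :=
  (Int.castAddHom ℚ).compLeft ι

theorem exists_pos_nat_smul_eq_intVecCast [Fintype ι] (t : ι → ℚ) :
    ∃ d : ℕ, 0 < d ∧ ∃ u : ι → ℤ, (d : ℚ) • t = intVecCast ι u := by
  have hdvd (i : ι) : ∃ m, ∏ j, (t j).den = (t i).den * m :=
    dvd_prod_of_mem _ (mem_univ i)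
  choose m hm using hdvd
  refine ⟨∏ j, (t j).den, prod_pos fun j _ => (t j).pos, fun i => m i * (t i).num, ?_⟩
  funext i
  simp only [Pi.smul_apply, smul_eq_mul, AddMonoidHom.compLeft_apply, Function.comp_apply,
    Int.coe_castAddHom, Int.cast_mul, Int.cast_natCast, hm i, Nat.cast_mul, ← Rat.mul_den_eq_num]
  ring

section LatticeCone

variable {S : AddSubmonoid (ι → ℤ)} {s : Finset κ} {w : κ → ι → ℤ}

theorem sub_sum_floor_smul_mem_box
    (hS : ∀ y, y ∈ S ↔ MemRatCone s (fun k => intVecCast ι (w k)) (intVecCast ι y))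
    {y : ι → ℤ} {c : κ → ℚ} (hc : ∀ k, 0 ≤ c k)
    (hy : intVecCast ι y = ∑ k ∈ s, c k • intVecCast ι (w k)) :
    y - ∑ k ∈ s, ⌊c k⌋₊ • w k ∈ S ∧
      ∀ j, |(y - ∑ k ∈ s, ⌊c k⌋₊ • w k) j| ≤ ∑ k ∈ s, |w k j| := by
  have hfrac : intVecCast ι (y - ∑ k ∈ s, ⌊c k⌋₊ • w k) =
      ∑ k ∈ s, (c k - ⌊c k⌋₊) • intVecCast ι (w k) := by
    simp only [map_sub, map_sum, map_nsmul, hy, sub_smul, sum_sub_distrib, Nat.cast_smul_eq_nsmul]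
  have hfrac_nonneg (k : κ) : 0 ≤ c k - ⌊c k⌋₊ := sub_nonneg.2 (Nat.floor_le (hc k))
  refine ⟨(hS _).2 ⟨_, hfrac_nonneg, hfrac⟩, fun j => ?_⟩
  have hj := congrFun hfrac j
  simp only [AddMonoidHom.compLeft_apply, Function.comp_apply, Int.coe_castAddHom,
    Finset.sum_apply, Pi.smul_apply, smul_eq_mul] at hj
  have hle : |((y - ∑ k ∈ s, ⌊c k⌋₊ • w k) j : ℚ)| ≤ ∑ k ∈ s, |(w k j : ℚ)| := by
    rw [hj]
    refine (abs_sum_le_sum_abs _ _).trans (sum_le_sum fun k _ => ?_)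
    rw [abs_mul, abs_of_nonneg (hfrac_nonneg k)]
    refine mul_le_of_le_one_left (abs_nonneg _) ?_
    linarith [Nat.lt_floor_add_one (c k)]
  exact_mod_cast hle

theorem AddSubmonoid.fg_of_forall_mem_iff_memRatCone [Finite ι]
    (hS : ∀ y, y ∈ S ↔ MemRatCone s (fun k => intVecCast ι (w k)) (intVecCast ι y)) :
    S.FG := by
  set box : Set (ι → ℤ) := {y | y ∈ S ∧ ∀ j, |y j| ≤ ∑ k ∈ s, |w k j|}
  have hbox : box.Finite :=
    (Set.Finite.pi' fun j => Set.finite_Icc (-∑ k ∈ s, |w k j|) (∑ k ∈ s, |w k j|)).subset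
      fun y hy j => abs_le.1 (hy.2 j)
  have hw : ∀ k ∈ s, w k ∈ closure box := fun k hk => by
    refine subset_closure ⟨(hS _).2 (memRatCone_of_mem hk), fun j => ?_⟩
    exact single_le_sum (f := fun k => |w k j|) (fun _ _ => abs_nonneg _) hk
  refine (fg_iff S).2 ⟨box, le_antisymm (closure_le.2 fun y hy => hy.1) fun y hy => ?_, hbox⟩
  obtain ⟨c, hc, hyc⟩ := (hS y).1 hy
  rw [← sub_add_cancel y (∑ k ∈ s, ⌊c k⌋₊ • w k)]
  exact add_mem (subset_closure (sub_sum_floor_smul_mem_box hS hc hyc))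
    (_root_.sum_mem fun k hk => nsmul_mem (hw k hk) _)

end LatticeCone

theorem stmt_5_general {n : ℕ} (S : AddSubmonoid (Fin n → ℤ))
    (hcone : ∃ T : Finset (Fin n → ℚ), ∀ y : Fin n → ℤ,
      y ∈ S ↔ ∃ c : (Fin n → ℚ) → ℚ, (∀ t, 0 ≤ c t) ∧
        (fun i => (y i : ℚ)) = ∑ t ∈ T, c t • t) :
    S.FG := by
  obtain ⟨T, hT⟩ := hcone
  choose d hd u hu using fun t : Fin n → ℚ => exists_pos_nat_smul_eq_intVecCast t
  refine S.fg_of_forall_mem_iff_memRatCone (s := T) (w := u) fun y => ?_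
  simp only [← hu]
  exact (hT y).trans (memRatCone_pos_smul_iff (v := fun t => t) fun t => Nat.cast_pos.2 (hd t)).symm

/-- Gordan's lemma, saturated-monoid form: a saturated submonoid of `ℤⁿ` which is
the set of lattice points of a finitely generated rational polyhedral cone is
finitely generated. -/
theorem stmt_5 {n : ℕ} (S : AddSubmonoid (Fin n → ℤ))
    (hsat : ∀ y : Fin n → ℤ, (∃ m : ℕ, 0 < m ∧ m • y ∈ S) → y ∈ S)
    (hcone : ∃ T : Finset (Fin n → ℚ), ∀ y : Fin n → ℤ,
      y ∈ S ↔ ∃ c : (Fin n → ℚ) → ℚ, (∀ t, 0 ≤ c t) ∧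
        (fun i => (y i : ℚ)) = ∑ t ∈ T, c t • t) :
    S.FG :=
  stmt_5_general S hcone
end
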